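/- Let n1, n2, n3, n4, m be nonnegative integers with n1 > n2, n3 ≥ n4, and m ≥ n1; let q = max(n1, n2, n3, n4, m) and let Q be the q×q shift matrix over 𝔽₂. Then there exist q×q matrices G_A, G_B over 𝔽₂ such that, with G_S = Q^{q−n3} G_A Q^{q−n1} + Q^{q−n4} G_B Q^{q−n2} and G_M = Q^{q−n3} G_A Q^{q−m} + Q^{q−n4} G_B Q^{q−m}, one has G_M = 0 and rank(G_S) − dim(range(G_S) ∩ range(G_M)) = min(n1, n4). -/

import Mathlib

/-- The `q × q` lower shift matrix over `𝔽₂`: entry `(i, j)` is `1` iff `i = j + 1`. -/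
def shiftQ (q : ℕ) : Matrix (Fin q) (Fin q) (ZMod 2) :=
  Matrix.of fun i j => if (i : ℕ) = (j : ℕ) + 1 then 1 else 0

/-- Source-to-destination transfer matrix
`G_S = Q^(q-n3) G_A Q^(q-n1) + Q^(q-n4) G_B Q^(q-n2)`. -/
def GSmat (q n1 n2 n3 n4 : ℕ) (GA GB : Matrix (Fin q) (Fin q) (ZMod 2)) :
    Matrix (Fin q) (Fin q) (ZMod 2) :=
  shiftQ q ^ (q - n3) * GA * shiftQ q ^ (q - n1) +
    shiftQ q ^ (q - n4) * GB * shiftQ q ^ (q - n2)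

/-- Interference transfer matrix
`G_M = Q^(q-n3) G_A Q^(q-m) + Q^(q-n4) G_B Q^(q-m)`. -/
def GMmat (q n3 n4 m : ℕ) (GA GB : Matrix (Fin q) (Fin q) (ZMod 2)) :
    Matrix (Fin q) (Fin q) (ZMod 2) :=
  shiftQ q ^ (q - n3) * GA * shiftQ q ^ (q - m) +
    shiftQ q ^ (q - n4) * GB * shiftQ q ^ (q - m)

/-- The achievable rate `rank G_S - dim (range G_S ∩ range G_M)` of a linear scheme. -/
noncomputable def linRate (q : ℕ) (GS GM : Matrix (Fin q) (Fin q) (ZMod 2)) : ℕ :=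
  GS.rank - Module.finrank (ZMod 2)
    ↥(LinearMap.range GS.mulVecLin ⊓ LinearMap.range GM.mulVecLin)


/-!
Take `G_B = (Q^(q-n1))ᵀ` and `G_A = Q^(n3-n4) G_B`. Then `Q^(q-n3) G_A = Q^(q-n4) G_B`, so the two
relays send the same signal over the disturbing link and `G_M` is twice a matrix, i.e. `0` over
`𝔽₂`. Factoring `Q^(q-n2) = Q^(q-n1) Q^(n1-n2)` gives
`G_S = Q^(q-n4) (Q^(q-n1))ᵀ Q^(q-n1) (1 + Q^(n1-n2))`, where `1 + Q^(n1-n2)` is unipotent because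
`n1 > n2`, hence invertible. The remaining factor keeps the first `n1` coordinates and shifts them
down by `q - n4`, so it has rank `min n1 n4`.
-/

open Matrix

def prefixProj (K : Type*) [Zero K] [One K] (q n : ℕ) : Matrix (Fin q) (Fin q) K :=
  diagonal fun j => if (j : ℕ) < n then 1 else 0

section prefixProj

variable {K : Type*}

theorem prefixProj_mul_prefixProj [NonAssocSemiring K] (q a b : ℕ) :
    prefixProj K q a * prefixProj K q b = prefixProj K q (min a b) := by
  simp only [prefixProj, diagonal_mul_diagonal, ite_zero_mul_ite_zero, one_mul, lt_min_iff]

theorem rank_prefixProj [Field K] {q n : ℕ} (hn : n ≤ q) : (prefixProj K q n).rank = n := by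
  classical
  rw [prefixProj, rank_diagonal]
  simpa only [ne_eq, ite_eq_right_iff, one_ne_zero, imp_false, not_not]
    using Fintype.card_fin_lt_of_le hn

end prefixProj

theorem shiftQ_pow_apply (q k : ℕ) (i j : Fin q) :
    (shiftQ q ^ k) i j = if (i : ℕ) = j + k then 1 else 0 := by
  induction k generalizing i with
  | zero => simp [one_apply, Fin.ext_iff]
  | succ k ih =>
    rw [pow_succ', mul_apply]
    simp only [ih]
    simp only [shiftQ, of_apply, ite_zero_mul_ite_zero, one_mul]
    by_cases hi : 0 < (i : ℕ)
    · rw [Finset.sum_eq_single_of_mem ⟨i - 1, by omega⟩ (Finset.mem_univ _)]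
      · congr 1
        simp only [eq_iff_iff]
        omega
      · intro l _ hl
        rw [if_neg]
        exact fun h => hl (Fin.ext (by simp only; omega))
    · rw [Finset.sum_eq_zero fun l _ => if_neg (by omega), if_neg (by omega)]

theorem isNilpotent_shiftQ (q : ℕ) : IsNilpotent (shiftQ q) :=
  ⟨q, by ext i j; simp only [shiftQ_pow_apply, Matrix.zero_apply]; exact if_neg (by omega)⟩

theorem shiftQ_pow_transpose_mul_self (q k : ℕ) :
    (shiftQ q ^ k)ᵀ * shiftQ q ^ k = prefixProj (ZMod 2) q (q - k) := by
  ext i j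
  simp only [mul_apply, transpose_apply, shiftQ_pow_apply, ite_zero_mul_ite_zero, one_mul,
    prefixProj, diagonal_apply]
  by_cases hi : (i : ℕ) + k < q
  · rw [Finset.sum_eq_single_of_mem ⟨i + k, hi⟩ (Finset.mem_univ _)]
    · split_ifs <;> simp_all [Fin.ext_iff]
      omega
    · intro l _ hl
      rw [if_neg]
      exact fun h => hl (Fin.ext h.1)
  · rw [Finset.sum_eq_zero fun l _ => if_neg (by omega)]
    split_ifs <;> first | rfl | omega

theorem shiftQ_pow_mul_prefixProj (q k : ℕ) :
    shiftQ q ^ k * prefixProj (ZMod 2) q (q - k) = shiftQ q ^ k := by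
  ext i j
  rw [prefixProj, mul_diagonal, shiftQ_pow_apply]
  split_ifs <;> first | rfl | omega

/-- `Q^k` already kills the last `k` coordinates (upper bound), and `(Q^k)ᵀ` is a left inverse of
`Q^k` on the first `q - k` coordinates (lower bound). -/
theorem rank_shiftQ_pow_mul_prefixProj (q k n : ℕ) :
    (shiftQ q ^ k * prefixProj (ZMod 2) q n).rank = min (q - k) n := by
  apply le_antisymm
  · calc (shiftQ q ^ k * prefixProj (ZMod 2) q n).rank
        = (shiftQ q ^ k * prefixProj (ZMod 2) q (min (q - k) n)).rank := by
          rw [← prefixProj_mul_prefixProj, ← mul_assoc, shiftQ_pow_mul_prefixProj]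
      _ ≤ (prefixProj (ZMod 2) q (min (q - k) n)).rank := rank_mul_le_right _ _
      _ = min (q - k) n := rank_prefixProj (by omega)
  · calc min (q - k) n = (prefixProj (ZMod 2) q (min (q - k) n)).rank :=
          (rank_prefixProj (by omega)).symm
      _ = ((shiftQ q ^ k)ᵀ * (shiftQ q ^ k * prefixProj (ZMod 2) q n)).rank := by
          rw [← mul_assoc, shiftQ_pow_transpose_mul_self, prefixProj_mul_prefixProj]
      _ ≤ (shiftQ q ^ k * prefixProj (ZMod 2) q n).rank := rank_mul_le_right _ _

theorem linRate_zero_right (q : ℕ) (GS : Matrix (Fin q) (Fin q) (ZMod 2)) :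
    linRate q GS 0 = GS.rank := by
  rw [linRate, mulVecLin_zero, LinearMap.range_zero, inf_bot_eq, finrank_bot, Nat.sub_zero]

theorem rate_achievable_case2_general
    (n1 n2 n3 n4 m q : ℕ) (hq : q = max n1 (max n2 (max n3 (max n4 m))))
    (h12 : n2 < n1) (h34 : n4 ≤ n3) :
    ∃ GA GB : Matrix (Fin q) (Fin q) (ZMod 2),
      GMmat q n3 n4 m GA GB = 0 ∧
      linRate q (GSmat q n1 n2 n3 n4 GA GB) (GMmat q n3 n4 m GA GB)
        = min n1 n4 := by
  set Q := shiftQ q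
  set GB := (Q ^ (q - n1))ᵀ
  have hAB : Q ^ (q - n3) * (Q ^ (n3 - n4) * GB) = Q ^ (q - n4) * GB := by
    rw [← mul_assoc, ← pow_add, show q - n3 + (n3 - n4) = q - n4 by omega]
  have hGM : GMmat q n3 n4 m (Q ^ (n3 - n4) * GB) GB = 0 := by
    rw [GMmat, hAB]
    ext i j
    exact CharTwo.add_self_eq_zero _
  have hGS : GSmat q n1 n2 n3 n4 (Q ^ (n3 - n4) * GB) GB =
      Q ^ (q - n4) * (GB * Q ^ (q - n1)) * (1 + Q ^ (n1 - n2)) := by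
    rw [GSmat, hAB, show q - n2 = q - n1 + (n1 - n2) by omega, pow_add]
    noncomm_ring
  have hunit : IsUnit (1 + Q ^ (n1 - n2)).det :=
    (isUnit_iff_isUnit_det _).mp ((isNilpotent_shiftQ q).pow_of_pos (by omega)).isUnit_one_add
  refine ⟨_, GB, hGM, ?_⟩
  rw [hGM, linRate_zero_right, hGS, rank_mul_eq_left_of_isUnit_det _ _ hunit,
    shiftQ_pow_transpose_mul_self, rank_shiftQ_pow_mul_prefixProj]
  omega

/-- Case `n1 > n2`, `n3 ≥ n4`, `m ≥ n1`: the upper bound is achievable with `G_M = 0`. -/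
theorem rate_achievable_case2
    (n1 n2 n3 n4 m q : ℕ) (hq : q = max n1 (max n2 (max n3 (max n4 m))))
    (h12 : n2 < n1) (h34 : n4 ≤ n3) (hm : n1 ≤ m) :
    ∃ GA GB : Matrix (Fin q) (Fin q) (ZMod 2),
      GMmat q n3 n4 m GA GB = 0 ∧
      linRate q (GSmat q n1 n2 n3 n4 GA GB) (GMmat q n3 n4 m GA GB)
        = min n1 n4 :=
  rate_achievable_case2_general n1 n2 n3 n4 m q hq h12 h34
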